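/- For all t > 0, θ ∈ ℝ, and x ∈ ℝ², the kernel K_{t,θ}(x) := π ∫∫_{0<u<v<t} g_u(x) G_θ(v-u) du dv satisfies K_{t,θ}(x) = K_{1, θ + log t}(x/√t), where G_θ(w) = ∫₀^∞ e^{(θ-γ)s} s w^{s-1} / Γ(s+1) ds and g_u is the standard 2d heat kernel. -/

import Mathlib

open Real

noncomputable def heatKernel2d (u : ℝ) (z : EuclideanSpace ℝ (Fin 2)) : ℝ :=
  (1 / (2 * Real.pi * u)) * Real.exp (-‖z‖ ^ 2 / (2 * u))

noncomputable def Gtheta (θ : ℝ) (w : ℝ) : ℝ :=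
  ∫ s in Set.Ioi (0:ℝ),
    Real.exp ((θ - Real.eulerMascheroniConstant) * s) * s * w ^ (s - 1) / Real.Gamma (s + 1)

noncomputable def Kkernel (t θ : ℝ) (x : EuclideanSpace ℝ (Fin 2)) : ℝ :=
  Real.pi * ∫ v in (0:ℝ)..t, ∫ u in (0:ℝ)..v, heatKernel2d u x * Gtheta θ (v - u)

/-! Write `x' = x / √t` and `θ' = θ + log t`. The heat kernel scales as
`g_{tu}(x) = t⁻¹ g_u(x')` and, since `(t w)^(s-1) = t^(s-1) w^(s-1)`, the factor `t^s` is absorbed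
into the exponential weight: `G_θ(t w) = t⁻¹ G_{θ'}(w)`. Substituting `(u, v) ↦ (t u, t v)` in the
double integral produces a Jacobian `t²` that cancels these two factors `t⁻¹`. -/

-- Real powers of negative bases are `exp (log x * z) * cos (z * π)`, which is still multiplicative
-- in the base once the other factor is positive.
theorem Real.mul_rpow_of_pos_left {x : ℝ} (hx : 0 < x) (y z : ℝ) :
    (x * y) ^ z = x ^ z * y ^ z := by
  rcases le_or_gt 0 y with hy | hy
  · exact Real.mul_rpow hx.le hy
  · rw [Real.rpow_def_of_neg (mul_neg_of_pos_of_neg hx hy), Real.rpow_def_of_neg hy,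
      Real.rpow_def_of_pos hx, Real.log_mul hx.ne' hy.ne, add_mul, Real.exp_add]
    ring

theorem intervalIntegral.integral_triangle_comp_mul {E : Type*} [NormedAddCommGroup E]
    [NormedSpace ℝ E] (F : ℝ → ℝ → E) (c : ℝ) :
    ∫ v in (0:ℝ)..c, ∫ u in (0:ℝ)..v, F u v =
      c ^ 2 • ∫ v in (0:ℝ)..1, ∫ u in (0:ℝ)..v, F (c * u) (c * v) := by
  calc ∫ v in (0:ℝ)..c, ∫ u in (0:ℝ)..v, F u v
      = c • ∫ v in (0:ℝ)..1, ∫ u in (0:ℝ)..c * v, F u (c * v) := by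
        rw [smul_integral_comp_mul_left (fun v => ∫ u in (0:ℝ)..v, F u v), mul_zero, mul_one]
    _ = c • ∫ v in (0:ℝ)..1, c • ∫ u in (0:ℝ)..v, F (c * u) (c * v) := by
        congr 1
        refine integral_congr fun v _ => ?_
        rw [smul_integral_comp_mul_left (fun u => F u (c * v)), mul_zero]
    _ = c ^ 2 • ∫ v in (0:ℝ)..1, ∫ u in (0:ℝ)..v, F (c * u) (c * v) := by
        rw [integral_smul, smul_smul, sq]

theorem heatKernel2d_mul_left {t : ℝ} (ht : 0 < t) (u : ℝ) (x : EuclideanSpace ℝ (Fin 2)) :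
    heatKernel2d (t * u) x = t⁻¹ * heatKernel2d u ((Real.sqrt t)⁻¹ • x) := by
  have hnorm : ‖(Real.sqrt t)⁻¹ • x‖ ^ 2 = ‖x‖ ^ 2 / t := by
    rw [norm_smul, norm_inv, Real.norm_eq_abs, abs_of_pos (Real.sqrt_pos.mpr ht), mul_pow,
      inv_pow, Real.sq_sqrt ht.le, div_eq_inv_mul]
  rw [heatKernel2d, heatKernel2d, hnorm]
  ring_nf

theorem Gtheta_mul_left {t : ℝ} (ht : 0 < t) (θ w : ℝ) :
    Gtheta θ (t * w) = t⁻¹ * Gtheta (θ + Real.log t) w := by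
  rw [Gtheta, Gtheta, ← MeasureTheory.integral_const_mul]
  refine MeasureTheory.setIntegral_congr_fun measurableSet_Ioi fun s _ => ?_
  have hweight : Real.exp ((θ - Real.eulerMascheroniConstant) * s) * t ^ (s - 1) =
      t⁻¹ * Real.exp ((θ + Real.log t - Real.eulerMascheroniConstant) * s) := by
    rw [Real.rpow_def_of_pos ht, ← Real.exp_add, ← Real.exp_log (inv_pos.mpr ht), Real.log_inv,
      ← Real.exp_add]
    ring_nf
  rw [Real.mul_rpow_of_pos_left ht]
  linear_combination (s * w ^ (s - 1) / Real.Gamma (s + 1)) * hweight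

theorem stmt_11 (t : ℝ) (ht : 0 < t) (θ : ℝ) (x : EuclideanSpace ℝ (Fin 2)) :
    Kkernel t θ x = Kkernel 1 (θ + Real.log t) ((Real.sqrt t)⁻¹ • x) := by
  have hscale : ∀ u v, heatKernel2d (t * u) x * Gtheta θ (t * v - t * u) =
      (t ^ 2)⁻¹ * (heatKernel2d u ((Real.sqrt t)⁻¹ • x) * Gtheta (θ + Real.log t) (v - u)) := by
    intro u v
    rw [← mul_sub, heatKernel2d_mul_left ht, Gtheta_mul_left ht]
    ring
  rw [Kkernel, Kkernel, intervalIntegral.integral_triangle_comp_mul]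
  simp_rw [hscale, intervalIntegral.integral_const_mul, smul_eq_mul]
  field_simp
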